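/- For every real z with 1/3 ≤ z ≤ 2/3, it holds that 1 − z/2 − z/6 − (1/2)·√( (2/3 − z)² + 4e^{−1}(1 − z)² ) ≥ 1/3. -/

import Mathlib

/-! On `[1/3, 2/3]` we have `|2/3 - z| ≤ (1 - z)/2`, and `4/e < 55/36`, so the radicand is at most
`(1/4 + 55/36)(1 - z)² = (4/3 · (1 - z))²`. With this bound on the square root the claim becomes
the identity `1 - 2z/3 - 2(1 - z)/3 = 1/3`. -/

open Real

lemma exp_neg_one_lt_55_div_144 : exp (-1) < 55 / 144 :=
  exp_neg_one_lt_d9.trans (by norm_num)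

lemma radicand_le_sq {z : ℝ} (h0 : 1 / 3 ≤ z) (h1 : z ≤ 2 / 3) :
    (2 / 3 - z) ^ 2 + 4 * exp (-1) * (1 - z) ^ 2 ≤ (4 / 3 * (1 - z)) ^ 2 := by
  have hlin : (2 / 3 - z) ^ 2 ≤ ((1 - z) / 2) ^ 2 := by nlinarith
  nlinarith [exp_neg_one_lt_55_div_144, sq_nonneg (1 - z)]

/-- Lower bound for `b(z) = 1 - z/2 - z/6 - √((2/3-z)² + 4e⁻¹(1-z)²)/2` on `[1/3, 2/3]`. -/
theorem b_ge_third
    (z : ℝ) (h0 : 1 / 3 ≤ z) (h1 : z ≤ 2 / 3) :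
    1 / 3 ≤ 1 - z / 2 - z / 6
      - (1 / 2) * Real.sqrt ((2 / 3 - z) ^ 2 + 4 * Real.exp (-1) * (1 - z) ^ 2) := by
  have hsqrt : √((2 / 3 - z) ^ 2 + 4 * exp (-1) * (1 - z) ^ 2) ≤ 4 / 3 * (1 - z) :=
    sqrt_le_iff.mpr ⟨by linarith, radicand_le_sq h0 h1⟩
  linarith
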